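/- arXiv:2409.17828 — 2 statements merged into one kernel-verified Lean document; each statement's English description precedes it below -/
import Mathlib

section
/- Let G be a group equipped with a norm ν : G → ℝ≥0 that is conjugation-invariant, symmetric (ν(g) = ν(g⁻¹)), subadditive (ν(gh) ≤ ν(g) + ν(h)), and vanishes at the identity. Let r : G → ℝ be a homogeneous quasimorphism with defect D that is Lipschitz with respect to ν with constant 1 (i.e. |r(g)| ≤ ν(g) for all g). Let S ≤ G be a subgroup on which r vanishes, and suppose there exists φ ∈ G with r(φ) ≠ 0. Define d(φS, ψS) = inf{ν(η) : η ∈ G, ηφS = ψS} on cosets of S. Then for every n ≥ 1: inf{ν(ψ) : ψ ∈ φⁿS} ≥ n·|r(φ)| − D. In particular the set of cosets {φⁿS : n ∈ ℕ} has infinite diameter for d. -/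
/-! Since `r` vanishes on `S` and has defect `D`, it moves by at most `D` along a coset:
`|r (φ ^ n * s) - r (φ ^ n)| ≤ D`. By homogeneity `r (φ ^ n) = n * r φ`, and the Lipschitz bound
`|r ψ| ≤ ν ψ` turns this into `n * |r φ| - D ≤ ν ψ` for every `ψ ∈ φ ^ n S`. -/

section Quasimorphism

variable {G : Type*} [Group G] {r : G → ℝ} {D : ℝ}

lemma abs_sub_le_of_mul_of_eq_zero (hr_defect : ∀ g h : G, |r (g * h) - r g - r h| ≤ D)
    (g : G) {s : G} (hs : r s = 0) : |r (g * s) - r g| ≤ D := by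
  simpa [hs] using hr_defect g s

lemma pow_natCast_of_homogeneous (hr_hom : ∀ (g : G) (n : ℤ), r (g ^ n) = n * r g)
    (g : G) (n : ℕ) : r (g ^ n) = n * r g := by
  simpa using hr_hom g n

end Quasimorphism

theorem khanevsky_argument_general {G : Type*} [Group G] (ν : G → ℝ) (r : G → ℝ) (D : ℝ)
    (hr_defect : ∀ g h : G, |r (g * h) - r g - r h| ≤ D)
    (hr_hom : ∀ (g : G) (n : ℤ), r (g ^ n) = n * r g)
    (hr_lip : ∀ g : G, |r g| ≤ ν g)
    (S : Subgroup G)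
    (hrS : ∀ s ∈ S, r s = 0)
    (φ : G) :
    ∀ n : ℕ, 1 ≤ n → ∀ ψ : G, (∃ s ∈ S, ψ = φ ^ n * s) → (n : ℝ) * |r φ| - D ≤ ν ψ := by
  rintro n - ψ ⟨s, hs, rfl⟩
  have h_coset := abs_sub_le_of_mul_of_eq_zero hr_defect (φ ^ n) (hrS s hs)
  calc (n : ℝ) * |r φ| - D
      = |r (φ ^ n)| - D := by
        rw [pow_natCast_of_homogeneous hr_hom, abs_mul, Nat.abs_cast]
    _ ≤ |r (φ ^ n * s)| := by
        have := (abs_sub_abs_le_abs_sub _ _).trans ((abs_sub_comm _ _).trans_le h_coset)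
        linarith
    _ ≤ ν (φ ^ n * s) := hr_lip _

theorem khanevsky_argument {G : Type*} [Group G] (ν : G → ℝ) (r : G → ℝ) (D : ℝ)
    (hν_nonneg : ∀ g : G, 0 ≤ ν g)
    (hν_conj : ∀ g h : G, ν (h * g * h⁻¹) = ν g)
    (hν_symm : ∀ g : G, ν g⁻¹ = ν g)
    (hν_sub : ∀ g h : G, ν (g * h) ≤ ν g + ν h)
    (hν_one : ν 1 = 0)
    (hr_defect : ∀ g h : G, |r (g * h) - r g - r h| ≤ D)
    (hr_hom : ∀ (g : G) (n : ℤ), r (g ^ n) = n * r g)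
    (hr_lip : ∀ g : G, |r g| ≤ ν g)
    (S : Subgroup G)
    (hrS : ∀ s ∈ S, r s = 0)
    (φ : G) (hφ : r φ ≠ 0) :
    ∀ n : ℕ, 1 ≤ n → ∀ ψ : G, (∃ s ∈ S, ψ = φ ^ n * s) → (n : ℝ) * |r φ| - D ≤ ν ψ :=
  khanevsky_argument_general ν r D hr_defect hr_hom hr_lip S hrS φ
end

section
/- Let G be a group with a subadditive symmetric norm ν, S ≤ G a subgroup, and suppose there exists a homogeneous quasimorphism r : G → ℝ with |r(g)| ≤ ν(g) for all g, r|_S = 0, and r not identically zero. Then the function n ↦ inf{ν(ψ) : ψ ∈ φⁿS} (for φ with r(φ) ≠ 0) is unbounded; in particular sup over cosets gS of inf{ν(ψ) : ψ ∈ gS} is infinite. -/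
/-!
Up to the defect `D`, a quasimorphism vanishing on `S` is constant on each coset `gS`, so on
`φⁿS` it has absolute value at least `n |r φ| - D`. Since `ν` dominates `|r|`, the same lower
bound holds for `ν`, and it grows linearly in `n` because `r φ ≠ 0`.
-/

section Quasimorphism

variable {G : Type*} [Group G] (r : G → ℝ) (D : ℝ)

theorem abs_sub_defect_le_abs_mul_of_eq_zero
    (hr_defect : ∀ g h : G, |r (g * h) - r g - r h| ≤ D) (g : G) {s : G} (hs : r s = 0) :
    |r g| - D ≤ |r (g * s)| := by
  have h := hr_defect g s
  rw [hs, sub_zero, abs_sub_comm] at h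
  linarith [abs_sub_abs_le_abs_sub (r g) (r (g * s))]

theorem natCast_mul_abs_sub_defect_le_abs_pow_mul
    (hr_defect : ∀ g h : G, |r (g * h) - r g - r h| ≤ D)
    (hr_hom : ∀ (g : G) (n : ℤ), r (g ^ n) = n * r g)
    (φ : G) (n : ℕ) {s : G} (hs : r s = 0) :
    n * |r φ| - D ≤ |r (φ ^ n * s)| := by
  have hpow : r (φ ^ n) = n * r φ := by exact_mod_cast hr_hom φ n
  have h := abs_sub_defect_le_abs_mul_of_eq_zero r D hr_defect (φ ^ n) hs
  rwa [hpow, abs_mul, Nat.abs_cast] at h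

end Quasimorphism

theorem infinite_hofer_diameter_general {G : Type*} [Group G] (ν : G → ℝ) (r : G → ℝ) (D : ℝ)
    (hr_defect : ∀ g h : G, |r (g * h) - r g - r h| ≤ D)
    (hr_hom : ∀ (g : G) (n : ℤ), r (g ^ n) = n * r g)
    (hr_lip : ∀ g : G, |r g| ≤ ν g)
    (S : Subgroup G) (hrS : ∀ s ∈ S, r s = 0)
    (φ : G) (hφ : r φ ≠ 0) :
    ∀ C : ℝ, ∃ n : ℕ, ∀ ψ : G, (∃ s ∈ S, ψ = φ ^ n * s) → C ≤ ν ψ := by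
  intro C
  obtain ⟨n, hn⟩ := exists_nat_ge ((C + D) / |r φ|)
  have hn' : C + D ≤ n * |r φ| := (div_le_iff₀ (abs_pos.mpr hφ)).mp hn
  refine ⟨n, ?_⟩
  rintro ψ ⟨s, hs, rfl⟩
  have hlower := natCast_mul_abs_sub_defect_le_abs_pow_mul r D hr_defect hr_hom φ n (hrS s hs)
  linarith [hr_lip (φ ^ n * s)]

theorem infinite_hofer_diameter {G : Type*} [Group G] (ν : G → ℝ) (r : G → ℝ) (D : ℝ)
    (hν_sub : ∀ g h : G, ν (g * h) ≤ ν g + ν h)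
    (hν_symm : ∀ g : G, ν g⁻¹ = ν g)
    (hr_defect : ∀ g h : G, |r (g * h) - r g - r h| ≤ D)
    (hr_hom : ∀ (g : G) (n : ℤ), r (g ^ n) = n * r g)
    (hr_lip : ∀ g : G, |r g| ≤ ν g)
    (S : Subgroup G) (hrS : ∀ s ∈ S, r s = 0)
    (φ : G) (hφ : r φ ≠ 0) :
    ∀ C : ℝ, ∃ n : ℕ, ∀ ψ : G, (∃ s ∈ S, ψ = φ ^ n * s) → C ≤ ν ψ :=
  infinite_hofer_diameter_general ν r D hr_defect hr_hom hr_lip S hrS φ hφ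
end
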